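/- Let d ≥ 1 and n ≥ 2. The maps φ and ψ are mutually inverse linear bijections between the space of covariant (n+1)-tensors over Fin d satisfying the K-condition of degree n and the space of covariant (n+1)-tensors over Fin d satisfying the G-condition of degree n: ψ∘φ is the identity on the former and φ∘ψ is the identity on the latter. -/

import Mathlib

/-- The sign of a permutation, as a real number. -/
def sgn {n : ℕ} (σ : Equiv.Perm (Fin n)) : ℝ := ((Equiv.Perm.sign σ : ℤ) : ℝ)

/-- The K-condition of degree `n` for a covariant `(n+1)`-tensor: antisymmetry in the first
`n` indices (permutations fixing the last slot) together with vanishing full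
antisymmetrization over all `n+1` indices. -/
def KCond {d n : ℕ} (T : (Fin (n + 1) → Fin d) → ℝ) : Prop :=
  (∀ σ : Equiv.Perm (Fin (n + 1)), σ (Fin.last n) = Fin.last n →
    ∀ μ : Fin (n + 1) → Fin d, T (fun i => μ (σ i)) = sgn σ * T μ) ∧
  (∀ μ : Fin (n + 1) → Fin d,
    ∑ σ : Equiv.Perm (Fin (n + 1)), sgn σ * T (fun i => μ (σ i)) = 0)

/-- The G-condition of degree `n` for a covariant `(n+1)`-tensor: antisymmetry in the first
`n−1` indices (permutations fixing the last two slots), symmetry in the last two indices, and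
the cyclic relation `∑_{i=0}^{n} (−1)^{i·n} S(μ ∘ τ^i) = 0`, where `τ` is the cyclic
permutation of the `n+1` index slots. -/
def GCond {d n : ℕ} (S : (Fin (n + 1) → Fin d) → ℝ) : Prop :=
  (∀ σ : Equiv.Perm (Fin (n + 1)), σ (Fin.last n) = Fin.last n →
    σ ⟨n - 1, by omega⟩ = ⟨n - 1, by omega⟩ →
    ∀ μ : Fin (n + 1) → Fin d, S (fun i => μ (σ i)) = sgn σ * S μ) ∧
  (∀ μ : Fin (n + 1) → Fin d,
    S (μ ∘ Equiv.swap (⟨n - 1, by omega⟩ : Fin (n + 1)) (Fin.last n)) = S μ) ∧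
  (∀ μ : Fin (n + 1) → Fin d,
    ∑ i ∈ Finset.range (n + 1),
      (-1 : ℝ) ^ (i * n) * S (fun j => μ ((finRotate (n + 1) ^ i) j)) = 0)

/-- The map `φ`, symmetrizing the last two indices of an `(n+1)`-tensor:
`φ(T)(μ₁,…,μ_{n−1},ν,λ) = ½(T(μ₁,…,μ_{n−1},ν,λ) + T(μ₁,…,μ_{n−1},λ,ν))`. -/
noncomputable def phi {d n : ℕ} (T : (Fin (n + 1) → Fin d) → ℝ) :
    (Fin (n + 1) → Fin d) → ℝ :=
  fun w => (1 / 2 : ℝ) *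
    (T w + T (w ∘ Equiv.swap (⟨n - 1, by omega⟩ : Fin (n + 1)) (Fin.last n)))

/-- The map `ψ`, antisymmetrizing the first `n` indices with the factor `2n/(n+1)`:
`ψ(S)(μ₁,…,μ_n,ν) = (2n/(n+1))·(1/n!)·∑_{σ ∈ Perm(Fin n)} sign σ · S(μ_{σ(1)},…,μ_{σ(n)},ν)`. -/
noncomputable def psi {d n : ℕ} (S : (Fin (n + 1) → Fin d) → ℝ) :
    (Fin (n + 1) → Fin d) → ℝ :=
  fun w => (2 * (n : ℝ) / ((n : ℝ) + 1)) * (Nat.factorial n : ℝ)⁻¹ *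
    ∑ σ : Equiv.Perm (Fin n),
      sgn σ * S (w ∘ Fin.snoc (Fin.castSucc ∘ ⇑σ) (Fin.last n))

/-!
The antisymmetries make `g ↦ sgn g * U (w ∘ g)`, for `g` a permutation of the index slots, depend
only on where `g` sends the last slot (K-condition) or the last two slots (G-condition). So a
K-tensor is encoded by a function `F w` of one slot and a G-tensor by a function `V w` of an ordered
pair of slots. In these terms `φ` sends `F` to its gradient `(F b - F a) / 2` and `ψ` sends `V` to
`2 / (n + 1) * ∑ a, V a b`. The vanishing full antisymmetrization of a K-tensor says `∑ a, F a = 0`,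
which gives `ψ ∘ φ = id`. The cyclic relation of a G-tensor says that `V w` sums to zero around every
tour of the `n + 1` slots; averaging it over the tours through a fixed edge `a → b` shows that `V w`
is itself the gradient of `1 / (n + 1) * ∑ a, V a ·`, which gives `φ ∘ ψ = id`.
-/

open Equiv Finset

section Sign

variable {N : ℕ}

lemma sgn_mul (σ τ : Perm (Fin N)) : sgn (σ * τ) = sgn σ * sgn τ := by
  simp [sgn]

@[simp] lemma sgn_one : sgn (1 : Perm (Fin N)) = 1 := by
  simp [sgn]

@[simp] lemma sgn_mul_self (σ : Perm (Fin N)) : sgn σ * sgn σ = 1 := by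
  rcases Int.units_eq_one_or (Perm.sign σ) with h | h <;> simp [sgn, h]

lemma sgn_swap {a b : Fin N} (h : a ≠ b) : sgn (swap a b) = -1 := by
  simp [sgn, Perm.sign_swap h]

lemma sgn_inv (σ : Perm (Fin N)) : sgn σ⁻¹ = sgn σ := by
  simp [sgn]

lemma sgn_finRotate_pow (n i : ℕ) : sgn (finRotate (n + 1) ^ i) = (-1) ^ (n * i) := by
  simp [sgn, sign_finRotate, pow_mul]

end Sign

lemma sum_perm_apply {N : ℕ} (F : Fin N → ℝ) (x : Fin N) :
    ∑ σ : Perm (Fin N), F (σ x) = (N - 1).factorial * ∑ a, F a := by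
  have hindep : ∀ y, ∑ σ : Perm (Fin N), F (σ y) = ∑ σ : Perm (Fin N), F (σ x) := fun y =>
    Fintype.sum_equiv (Equiv.mulRight (swap x y)) _ _ fun σ => by simp
  apply mul_left_cancel₀ (Nat.cast_ne_zero.mpr (Fin.pos x).ne' : (N : ℝ) ≠ 0)
  calc (N : ℝ) * ∑ σ : Perm (Fin N), F (σ x)
      = ∑ y, ∑ σ : Perm (Fin N), F (σ y) := by simp [hindep]
    _ = ∑ σ : Perm (Fin N), ∑ a, F a := by
      rw [Finset.sum_comm]; exact Finset.sum_congr rfl fun σ _ => Equiv.sum_comp σ F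
    _ = N * ((N - 1).factorial * ∑ a, F a) := by
      rw [Finset.sum_const, card_univ, Fintype.card_perm, Fintype.card_fin, nsmul_eq_mul,
        ← Nat.mul_factorial_pred (Fin.pos x).ne']
      push_cast; ring

lemma sum_sum_eq_zero_of_antisymm {α : Type*} [Fintype α] (V : α → α → ℝ)
    (hV : ∀ a b, V b a = -V a b) : ∑ a, ∑ b, V a b = 0 := by
  have h : ∑ a, ∑ b, V a b = -∑ a, ∑ b, V a b :=
    calc ∑ a, ∑ b, V a b = ∑ b, ∑ a, V a b := Finset.sum_comm
      _ = ∑ b, ∑ a, -V b a :=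
        Finset.sum_congr rfl fun b _ => Finset.sum_congr rfl fun a _ => hV b a
      _ = -∑ b, ∑ a, V b a := by simp only [Finset.sum_neg_distrib]
  linarith

def extendLast {n : ℕ} (σ : Perm (Fin n)) : Perm (Fin (n + 1)) :=
  permCongr finSuccEquivLast.symm σ.optionCongr

@[simp] lemma extendLast_castSucc {n : ℕ} (σ : Perm (Fin n)) (i : Fin n) :
    extendLast σ i.castSucc = (σ i).castSucc := by
  simp [extendLast, permCongr_apply]

@[simp] lemma extendLast_last {n : ℕ} (σ : Perm (Fin n)) :
    extendLast σ (Fin.last n) = Fin.last n := by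
  simp [extendLast, permCongr_apply]

@[simp] lemma sgn_extendLast {n : ℕ} (σ : Perm (Fin n)) : sgn (extendLast σ) = sgn σ := by
  simp [sgn, extendLast, Perm.sign_permCongr, optionCongr_sign]

lemma snoc_castSucc_comp_eq_extendLast {n : ℕ} (σ : Perm (Fin n)) :
    (Fin.snoc (Fin.castSucc ∘ σ) (Fin.last n) : Fin (n + 1) → Fin (n + 1)) = extendLast σ := by
  funext x
  induction x using Fin.lastCases <;> simp

def pairPerm {α : Type*} [DecidableEq α] (p q a b : α) : Perm α :=
  swap p a * swap q (swap p a b)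

section PairPerm

variable {α : Type*} [DecidableEq α] {p q a b : α}

lemma pairPerm_apply_left (hpq : p ≠ q) (hab : a ≠ b) : pairPerm p q a b p = a := by
  have : swap p a b ≠ p := fun h => hab (by simpa using congrArg (swap p a) h.symm)
  simp [pairPerm, swap_apply_of_ne_of_ne hpq this.symm]

lemma pairPerm_apply_right : pairPerm p q a b q = b := by
  simp [pairPerm]

end PairPerm

section Forms

variable {ι : Type*} {N : ℕ} {p q : Fin N} {U : (Fin N → ι) → ℝ}

def IsSlotForm (q : Fin N) (U : (Fin N → ι) → ℝ) (F : (Fin N → ι) → Fin N → ℝ) : Prop :=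
  ∀ w (g : Perm (Fin N)), U (w ∘ g) = sgn g * F w (g q)

def IsPairForm (p q : Fin N) (U : (Fin N → ι) → ℝ) (V : (Fin N → ι) → Fin N → Fin N → ℝ) :
    Prop :=
  ∀ w (g : Perm (Fin N)), U (w ∘ g) = sgn g * V w (g p) (g q)

lemma IsSlotForm.apply_eq {F : (Fin N → ι) → Fin N → ℝ} (hU : IsSlotForm q U F)
    (w : Fin N → ι) : U w = F w q := by
  simpa using hU w 1

lemma IsPairForm.apply_eq {V : (Fin N → ι) → Fin N → Fin N → ℝ} (hU : IsPairForm p q U V)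
    (w : Fin N → ι) : U w = V w p q := by
  simpa using hU w 1

def slotValue (q : Fin N) (U : (Fin N → ι) → ℝ) (w : Fin N → ι) (a : Fin N) : ℝ :=
  sgn (swap a q) * U (w ∘ swap a q)

lemma isSlotForm_slotValue (hU : ∀ σ : Perm (Fin N), σ q = q → ∀ w, U (w ∘ σ) = sgn σ * U w) :
    IsSlotForm q U (slotValue q U) := by
  intro w g
  set s := swap (g q) q
  have hcomp : (w ∘ s) ∘ (s * g) = w ∘ g := by ext; simp [s]
  rw [← hcomp, hU _ (by simp [s]), sgn_mul, slotValue]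
  ring

def pairValue (p q : Fin N) (U : (Fin N → ι) → ℝ) (w : Fin N → ι) (a b : Fin N) : ℝ :=
  if a = b then 0 else sgn (pairPerm p q a b) * U (w ∘ pairPerm p q a b)

@[simp] lemma pairValue_self (w : Fin N → ι) (a : Fin N) : pairValue p q U w a a = 0 := by
  simp [pairValue]

lemma isPairForm_pairValue (hpq : p ≠ q)
    (hU : ∀ σ : Perm (Fin N), σ q = q → σ p = p → ∀ w, U (w ∘ σ) = sgn σ * U w) :
    IsPairForm p q U (pairValue p q U) := by
  intro w g
  have hne : g p ≠ g q := g.injective.ne hpq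
  set G := pairPerm p q (g p) (g q)
  have hGp : G p = g p := pairPerm_apply_left hpq hne
  have hGq : G q = g q := pairPerm_apply_right
  have hcomp : (w ∘ G) ∘ (G⁻¹ * g) = w ∘ g := by ext; simp
  rw [← hcomp, hU _ (by simp [← hGq]) (by simp [← hGp]), pairValue, if_neg hne, sgn_mul, sgn_inv]
  ring

end Forms

lemma sum_filter_apply_eq_mul_right {α : Type*} [Fintype α] [DecidableEq α] {x y a b : α}
    {s : Perm α} (hx : s x = x) (hy : s y = y) (f : Perm α → ℝ) :
    ∑ e ∈ univ.filter (fun e : Perm α => e x = a ∧ e y = b), f (e * s) =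
      ∑ e ∈ univ.filter (fun e : Perm α => e x = a ∧ e y = b), f e :=
  Finset.sum_equiv (Equiv.mulRight s) (by simp [hx, hy]) (by simp)

section Tours

variable {k : ℕ} (X : Fin (k + 3) → Fin (k + 3) → ℝ)

lemma sum_cycle_sub_sum_cycle_mul_swap (hX : ∀ a b, X b a = -X a b) (e : Perm (Fin (k + 3))) :
    ∑ i, X (e i) (e (i + 1)) -
        ∑ i, X ((e * swap (0 : Fin (k + 3)) 1) i) ((e * swap (0 : Fin (k + 3)) 1) (i + 1)) =
      (X (e 0) (e 1) + X (e 1) (e 2) + X (e 2) (e 0)) +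
        (X (e 0) (e 1) + X (e 1) (e (Fin.last _)) + X (e (Fin.last _)) (e 0)) := by
  have h20 : (2 : Fin (k + 3)) ≠ 0 := by rw [Ne, Fin.ext_iff, Fin.val_two]; simp
  have h21 : (2 : Fin (k + 3)) ≠ 1 := by rw [Ne, Fin.ext_iff, Fin.val_two]; simp
  have h0l : (0 : Fin (k + 3)) ≠ Fin.last _ := by simp [Fin.ext_iff]
  have h1l : (1 : Fin (k + 3)) ≠ Fin.last _ := by simp [Fin.ext_iff]
  rw [← Finset.sum_sub_distrib, ← Finset.sum_subset (subset_univ {0, 1, Fin.last _})]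
  · have h11 : (1 : Fin (k + 3)) + 1 = 2 := rfl
    rw [sum_insert (by simp [h0l]), sum_insert (by simp [h1l]), sum_singleton]
    simp [h11, swap_apply_of_ne_of_ne h20 h21, swap_apply_of_ne_of_ne h0l.symm h1l.symm]
    linear_combination -hX (e 0) (e 1) - hX (e 0) (e 2) - hX (e (Fin.last _)) (e 1)
  · intro i _ hi
    simp only [mem_insert, mem_singleton, not_or] at hi
    obtain ⟨hi0, hi1, hil⟩ := hi
    have h1 : i + 1 ≠ 0 := by rw [Ne, Fin.ext_iff, Fin.val_add_one, if_neg hil]; simp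
    have h2 : i + 1 ≠ 1 := by simpa using hi0
    simp [swap_apply_of_ne_of_ne hi0 hi1, swap_apply_of_ne_of_ne h1 h2]

lemma sum_filter_triangle_eq_zero (hX : ∀ a b, X b a = -X a b)
    (hcycle : ∀ e : Perm (Fin (k + 3)), ∑ i, X (e i) (e (i + 1)) = 0) (a b j : Fin (k + 3)) :
    ∑ e ∈ univ.filter (fun e : Perm (Fin (k + 3)) => e 0 = a ∧ e 1 = b),
      (X a b + X b (e j) + X (e j) a) = 0 := by
  set t : Fin (k + 3) → ℝ := fun c => X a b + X b c + X c a
  set E := univ.filter fun e : Perm (Fin (k + 3)) => e 0 = a ∧ e 1 = b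
  change ∑ e ∈ E, t (e j) = 0
  have hdiag : ∀ a, X a a = 0 := fun a => by linarith [hX a a]
  have h20 : (2 : Fin (k + 3)) ≠ 0 := by rw [Ne, Fin.ext_iff, Fin.val_two]; simp
  have h21 : (2 : Fin (k + 3)) ≠ 1 := by rw [Ne, Fin.ext_iff, Fin.val_two]; simp
  have hpos : ∀ j, j ≠ 0 → j ≠ 1 → ∑ e ∈ E, t (e j) = ∑ e ∈ E, t (e 2) := fun j hj0 hj1 => by
    simpa [E] using sum_filter_apply_eq_mul_right (a := a) (b := b)
      (swap_apply_of_ne_of_ne h20.symm hj0.symm) (swap_apply_of_ne_of_ne h21.symm hj1.symm)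
      fun e => t (e 2)
  have h2 : ∑ e ∈ E, t (e 2) = 0 := by
    have hrel : ∀ e ∈ E, t (e 2) + t (e (Fin.last _)) = 0 := by
      intro e he
      simp only [E, mem_filter] at he
      have := sum_cycle_sub_sum_cycle_mul_swap X hX e
      rw [hcycle, hcycle, he.2.1, he.2.2] at this
      simp only [t]
      linarith
    have := Finset.sum_eq_zero hrel
    rw [sum_add_distrib, hpos (Fin.last _) (by simp [Fin.ext_iff]) (by simp [Fin.ext_iff])] at this
    linarith
  by_cases hj0 : j = 0
  · refine Finset.sum_eq_zero fun e he => ?_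
    simp only [E, mem_filter] at he
    simp only [t, hj0, he.2.1, hdiag]
    linarith [hX a b]
  by_cases hj1 : j = 1
  · refine Finset.sum_eq_zero fun e he => ?_
    simp only [E, mem_filter] at he
    simp only [t, hj1, he.2.2, hdiag]
    linarith [hX a b]
  rw [hpos j hj0 hj1, h2]

lemma sum_triangle_eq_zero (hX : ∀ a b, X b a = -X a b)
    (hcycle : ∀ e : Perm (Fin (k + 3)), ∑ i, X (e i) (e (i + 1)) = 0) (a b : Fin (k + 3)) :
    ∑ c, (X a b + X b c + X c a) = 0 := by
  rcases eq_or_ne a b with rfl | hab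
  · exact Finset.sum_eq_zero fun c _ => by linarith [hX a c, hX a a]
  set E := univ.filter fun e : Perm (Fin (k + 3)) => e 0 = a ∧ e 1 = b
  have hE : E.Nonempty :=
    ⟨pairPerm 0 1 a b, by simp [E, pairPerm_apply_left zero_ne_one hab, pairPerm_apply_right]⟩
  have : (#E : ℝ) * ∑ c, (X a b + X b c + X c a) = 0 :=
    calc (#E : ℝ) * ∑ c, (X a b + X b c + X c a)
        = ∑ e ∈ E, ∑ j, (X a b + X b (e j) + X (e j) a) := by
          rw [Finset.sum_congr rfl fun e _ => Equiv.sum_comp e fun c => X a b + X b c + X c a,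
            sum_const, nsmul_eq_mul]
      _ = ∑ j, ∑ e ∈ E, (X a b + X b (e j) + X (e j) a) := Finset.sum_comm
      _ = 0 := Finset.sum_eq_zero fun j _ => sum_filter_triangle_eq_zero X hX hcycle a b j
  exact (mul_eq_zero.mp this).resolve_left (Nat.cast_ne_zero.mpr hE.card_pos.ne')

end Tours

theorem mul_eq_sum_sub_sum_of_sum_cycle_eq_zero {N : ℕ} [NeZero N] (hN : 3 ≤ N)
    (X : Fin N → Fin N → ℝ) (hX : ∀ a b, X b a = -X a b)
    (hcycle : ∀ e : Perm (Fin N), ∑ i, X (e i) (e (i + 1)) = 0) (a b : Fin N) :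
    N * X a b = ∑ c, X c b - ∑ c, X c a := by
  obtain ⟨k, rfl⟩ : ∃ k, N = k + 3 := ⟨N - 3, by omega⟩
  have htri := sum_triangle_eq_zero X hX hcycle a b
  have hrow : ∑ c, X b c = -∑ c, X c b := by
    rw [← Finset.sum_neg_distrib]; exact Finset.sum_congr rfl fun c _ => hX c b
  simp only [sum_add_distrib, sum_const, card_univ, Fintype.card_fin, nsmul_eq_mul] at htri
  push_cast at htri ⊢
  linarith

section Rotation

open Fin.NatCast

variable {n : ℕ}

lemma finRotate_pow_apply (i : ℕ) (x : Fin (n + 1)) : (finRotate (n + 1) ^ i) x = x + i := by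
  induction i generalizing x with
  | zero => simp
  | succ i ih =>
    rw [pow_succ, Perm.mul_apply, finRotate_apply, ih, Nat.cast_succ, add_assoc, add_comm 1]

lemma sum_range_add_natCast (G : Fin (n + 1) → ℝ) (x : Fin (n + 1)) :
    ∑ i ∈ range (n + 1), G (x + i) = ∑ y, G y := by
  rw [← Fin.sum_univ_eq_sum_range (fun i => G (x + i))]
  simp only [Fin.cast_val_eq_self]
  exact Equiv.sum_comp (Equiv.addLeft x) G

end Rotation

abbrev penult (n : ℕ) : Fin (n + 1) := ⟨n - 1, by omega⟩

section Tensors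

variable {d n : ℕ} {U : (Fin (n + 1) → Fin d) → ℝ}

lemma penult_ne_last (hn : 1 ≤ n) : penult n ≠ Fin.last n := by
  simp [Fin.ext_iff]; omega

lemma penult_add_one (hn : 1 ≤ n) : penult n + 1 = Fin.last n := by
  rw [Fin.ext_iff, Fin.val_add_one, if_neg (penult_ne_last hn)]; simp; omega

lemma isPairForm_phi (hn : 1 ≤ n) {F : (Fin (n + 1) → Fin d) → Fin (n + 1) → ℝ}
    (hU : IsSlotForm (Fin.last n) U F) :
    IsPairForm (penult n) (Fin.last n) (phi U) fun w a b => (F w b - F w a) / 2 := by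
  intro w g
  have hswap := hU w (g * swap (penult n) (Fin.last n))
  rw [Perm.coe_mul, ← Function.comp_assoc, sgn_mul, sgn_swap (penult_ne_last hn),
    Function.comp_apply, swap_apply_right] at hswap
  simp only [phi]
  rw [hU w g, hswap]
  ring

lemma isSlotForm_psi (hn : 1 ≤ n) {V : (Fin (n + 1) → Fin d) → Fin (n + 1) → Fin (n + 1) → ℝ}
    (hU : IsPairForm (penult n) (Fin.last n) U V) (hV : ∀ w a, V w a a = 0) :
    IsSlotForm (Fin.last n) (psi U) fun w b => 2 / (n + 1) * ∑ a, V w a b := by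
  intro w h
  have hterm : ∀ σ : Perm (Fin n),
      sgn σ * U ((w ∘ h) ∘ Fin.snoc (Fin.castSucc ∘ σ) (Fin.last n)) =
        sgn h * V w (h (σ ⟨n - 1, by omega⟩).castSucc) (h (Fin.last n)) := by
    intro σ
    have hp : extendLast σ (penult n) = (σ ⟨n - 1, by omega⟩).castSucc :=
      extendLast_castSucc σ ⟨n - 1, by omega⟩
    rw [snoc_castSucc_comp_eq_extendLast, Function.comp_assoc, ← Perm.coe_mul, hU, sgn_mul,
      sgn_extendLast, Perm.mul_apply, Perm.mul_apply, hp, extendLast_last]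
    linear_combination (sgn h * V w (h (σ ⟨n - 1, by omega⟩).castSucc) (h (Fin.last n))) *
      sgn_mul_self σ
  have hsum : ∑ a : Fin n, V w (h a.castSucc) (h (Fin.last n)) =
      ∑ a, V w a (h (Fin.last n)) := by
    rw [← Equiv.sum_comp h, Fin.sum_univ_castSucc, hV, add_zero]
  simp only [psi]
  rw [Finset.sum_congr rfl fun σ _ => hterm σ, ← Finset.mul_sum,
    sum_perm_apply (fun a => V w (h a.castSucc) (h (Fin.last n))), hsum,
    ← Nat.mul_factorial_pred (show n ≠ 0 by omega)]
  have : ((n - 1).factorial : ℝ) ≠ 0 := by positivity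
  push_cast
  field_simp

lemma kCond_of_isSlotForm {F : (Fin (n + 1) → Fin d) → Fin (n + 1) → ℝ}
    (hU : IsSlotForm (Fin.last n) U F) (hF : ∀ w, ∑ a, F w a = 0) : KCond U := by
  refine ⟨fun σ hσ w => ?_, fun w => ?_⟩
  · change U (w ∘ σ) = _
    rw [hU, hσ, ← hU.apply_eq]
  · change ∑ σ : Perm (Fin (n + 1)), sgn σ * U (w ∘ σ) = 0
    simp only [hU w, ← mul_assoc, sgn_mul_self, one_mul]
    rw [sum_perm_apply, hF, mul_zero]

lemma isSlotForm_of_kCond (hU : KCond U) : IsSlotForm (Fin.last n) U (slotValue (Fin.last n) U) :=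
  isSlotForm_slotValue hU.1

lemma sum_slotValue_of_kCond (hU : KCond U) (w : Fin (n + 1) → Fin d) :
    ∑ a, slotValue (Fin.last n) U w a = 0 := by
  have h := hU.2 w
  change ∑ σ : Perm (Fin (n + 1)), sgn σ * U (w ∘ σ) = 0 at h
  simp only [isSlotForm_of_kCond hU w, ← mul_assoc, sgn_mul_self, one_mul] at h
  rw [sum_perm_apply] at h
  exact (mul_eq_zero.mp h).resolve_left (by positivity)

open Fin.NatCast in
lemma sum_rotate_of_isPairForm (hn : 1 ≤ n)
    {V : (Fin (n + 1) → Fin d) → Fin (n + 1) → Fin (n + 1) → ℝ}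
    (hU : IsPairForm (penult n) (Fin.last n) U V) (w : Fin (n + 1) → Fin d)
    (e : Perm (Fin (n + 1))) :
    ∑ i ∈ range (n + 1), (-1 : ℝ) ^ (i * n) * U (fun j => (w ∘ e) ((finRotate (n + 1) ^ i) j)) =
      sgn e * ∑ j, V w (e j) (e (j + 1)) := by
  have hterm : ∀ i ∈ range (n + 1),
      (-1 : ℝ) ^ (i * n) * U (fun j => (w ∘ e) ((finRotate (n + 1) ^ i) j)) =
        sgn e * V w (e (penult n + i)) (e (penult n + i + 1)) := by
    intro i _
    have hsign : (-1 : ℝ) ^ (i * n) * (-1) ^ (n * i) = 1 := by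
      rw [← pow_add, mul_comm n i, ← two_mul, pow_mul]; simp
    change _ * U (w ∘ ⇑(e * finRotate (n + 1) ^ i)) = _
    rw [hU, sgn_mul, sgn_finRotate_pow, Perm.mul_apply, Perm.mul_apply, finRotate_pow_apply,
      finRotate_pow_apply, ← penult_add_one hn, add_right_comm]
    linear_combination (sgn e * V w (e (penult n + i)) (e (penult n + i + 1))) * hsign
  rw [Finset.sum_congr rfl hterm, ← Finset.mul_sum,
    sum_range_add_natCast (fun x => V w (e x) (e (x + 1)))]

lemma gCond_of_isPairForm (hn : 1 ≤ n) {V : (Fin (n + 1) → Fin d) → Fin (n + 1) → Fin (n + 1) → ℝ}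
    (hU : IsPairForm (penult n) (Fin.last n) U V) (hV : ∀ w a b, V w b a = -V w a b)
    (hcycle : ∀ w, ∑ j, V w j (j + 1) = 0) : GCond U := by
  refine ⟨fun σ hq hp w => ?_, fun w => ?_, fun w => ?_⟩
  · change U (w ∘ σ) = _
    rw [hU, hq, hp, ← hU.apply_eq]
  · rw [hU, sgn_swap (penult_ne_last hn), swap_apply_left, swap_apply_right, hV, hU.apply_eq]
    ring
  · simpa [hcycle] using sum_rotate_of_isPairForm hn hU w 1

lemma isPairForm_of_gCond (hn : 1 ≤ n) (hU : GCond U) :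
    IsPairForm (penult n) (Fin.last n) U (pairValue (penult n) (Fin.last n) U) :=
  isPairForm_pairValue (penult_ne_last hn) hU.1

lemma pairValue_swap_of_gCond (hn : 1 ≤ n) (hU : GCond U) (w : Fin (n + 1) → Fin d)
    (a b : Fin (n + 1)) :
    pairValue (penult n) (Fin.last n) U w b a = -pairValue (penult n) (Fin.last n) U w a b := by
  rcases eq_or_ne a b with rfl | hab
  · simp
  set g := pairPerm (penult n) (Fin.last n) a b
  have hpair := isPairForm_of_gCond hn hU
  have h := hU.2.1 (w ∘ g)
  rw [Function.comp_assoc, ← Perm.coe_mul, hpair, hpair, sgn_mul, sgn_swap (penult_ne_last hn),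
    Perm.mul_apply, Perm.mul_apply, swap_apply_left, swap_apply_right,
    pairPerm_apply_left (penult_ne_last hn) hab, pairPerm_apply_right] at h
  linear_combination (-sgn g) * h -
    (pairValue (penult n) (Fin.last n) U w b a + pairValue (penult n) (Fin.last n) U w a b) *
      sgn_mul_self g

lemma mul_pairValue_of_gCond (hn : 2 ≤ n) (hU : GCond U) (w : Fin (n + 1) → Fin d)
    (a b : Fin (n + 1)) :
    (n + 1 : ℝ) * pairValue (penult n) (Fin.last n) U w a b =
      ∑ c, pairValue (penult n) (Fin.last n) U w c b -
        ∑ c, pairValue (penult n) (Fin.last n) U w c a := by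
  have hcycle : ∀ e : Perm (Fin (n + 1)),
      ∑ j, pairValue (penult n) (Fin.last n) U w (e j) (e (j + 1)) = 0 := by
    intro e
    have h := sum_rotate_of_isPairForm (by omega) (isPairForm_of_gCond (by omega) hU) w e
    rw [hU.2.2] at h
    exact (mul_eq_zero.mp h.symm).resolve_left (left_ne_zero_of_mul_eq_one (sgn_mul_self e))
  exact_mod_cast mul_eq_sum_sub_sum_of_sum_cycle_eq_zero (by omega) _
    (pairValue_swap_of_gCond (by omega) hU w) hcycle a b

theorem gCond_phi_of_isSlotForm (hn : 1 ≤ n) {F : (Fin (n + 1) → Fin d) → Fin (n + 1) → ℝ}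
    (hU : IsSlotForm (Fin.last n) U F) : GCond (phi U) := by
  refine gCond_of_isPairForm hn (isPairForm_phi hn hU) (fun w a b => by ring) fun w => ?_
  have hshift := Equiv.sum_comp (Equiv.addRight (1 : Fin (n + 1))) (F w)
  simp only [Equiv.coe_addRight] at hshift
  rw [← sum_div, sum_sub_distrib, hshift, sub_self, zero_div]

theorem kCond_psi_of_isPairForm (hn : 1 ≤ n)
    {V : (Fin (n + 1) → Fin d) → Fin (n + 1) → Fin (n + 1) → ℝ}
    (hU : IsPairForm (penult n) (Fin.last n) U V) (hV : ∀ w a b, V w b a = -V w a b) :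
    KCond (psi U) := by
  refine kCond_of_isSlotForm (isSlotForm_psi hn hU fun w a => by linarith [hV w a a]) fun w => ?_
  rw [← mul_sum, sum_comm, sum_sum_eq_zero_of_antisymm _ (hV w), mul_zero]

theorem psi_phi_of_isSlotForm (hn : 1 ≤ n) {F : (Fin (n + 1) → Fin d) → Fin (n + 1) → ℝ}
    (hU : IsSlotForm (Fin.last n) U F) (hF : ∀ w, ∑ a, F w a = 0) : psi (phi U) = U := by
  funext w
  rw [(isSlotForm_psi hn (isPairForm_phi hn hU) fun w a => by ring).apply_eq, hU.apply_eq,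
    ← sum_div, sum_sub_distrib, hF, sum_const, card_univ, Fintype.card_fin, nsmul_eq_mul]
  field_simp
  push_cast
  ring

theorem phi_psi_of_isPairForm (hn : 1 ≤ n)
    {V : (Fin (n + 1) → Fin d) → Fin (n + 1) → Fin (n + 1) → ℝ}
    (hU : IsPairForm (penult n) (Fin.last n) U V)
    (hV : ∀ w a b, (n + 1 : ℝ) * V w a b = ∑ c, V w c b - ∑ c, V w c a) : phi (psi U) = U := by
  have hdiag : ∀ w a, V w a a = 0 := fun w a => by
    have h := hV w a a
    rw [sub_self] at h
    exact (mul_eq_zero.mp h).resolve_left (by positivity)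
  funext w
  rw [(isPairForm_phi hn (isSlotForm_psi hn hU hdiag)).apply_eq, hU.apply_eq]
  have := hV w (penult n) (Fin.last n)
  field_simp
  linarith

end Tensors

theorem stmt7_general (d n : ℕ) (hn : 2 ≤ n) :
    -- linearity of φ and ψ:
    (∀ (a b : ℝ) (T T' : (Fin (n + 1) → Fin d) → ℝ),
      phi (fun w => a * T w + b * T' w) = fun w => a * phi T w + b * phi T' w) ∧
    (∀ (a b : ℝ) (S S' : (Fin (n + 1) → Fin d) → ℝ),
      psi (fun w => a * S w + b * S' w) = fun w => a * psi S w + b * psi S' w) ∧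
    -- φ maps the K-space into the G-space and ψ maps the G-space into the K-space:
    (∀ T : (Fin (n + 1) → Fin d) → ℝ, KCond T → GCond (phi T)) ∧
    (∀ S : (Fin (n + 1) → Fin d) → ℝ, GCond S → KCond (psi S)) ∧
    -- ψ ∘ φ is the identity on the K-space:
    (∀ T : (Fin (n + 1) → Fin d) → ℝ, KCond T → psi (phi T) = T) ∧
    -- φ ∘ ψ is the identity on the G-space:
    (∀ S : (Fin (n + 1) → Fin d) → ℝ, GCond S → phi (psi S) = S) := by
  have hn1 : 1 ≤ n := by omega
  refine ⟨fun a b T T' => ?_, fun a b S S' => ?_, fun T hT => ?_, fun S hS => ?_,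
    fun T hT => ?_, fun S hS => ?_⟩
  · funext w
    simp only [phi]
    ring
  · funext w
    simp only [psi, mul_add, mul_left_comm (sgn _) a, mul_left_comm (sgn _) b, sum_add_distrib,
      ← mul_sum]
    ring
  · exact gCond_phi_of_isSlotForm hn1 (isSlotForm_of_kCond hT)
  · exact kCond_psi_of_isPairForm hn1 (isPairForm_of_gCond hn1 hS) (pairValue_swap_of_gCond hn1 hS)
  · exact psi_phi_of_isSlotForm hn1 (isSlotForm_of_kCond hT) (sum_slotValue_of_kCond hT)
  · exact phi_psi_of_isPairForm hn1 (isPairForm_of_gCond hn1 hS) (mul_pairValue_of_gCond hn hS)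

/-- (Corollary to Propositions 3 and 5: `K^n(M) ≅ G^n(M)`.)  For `d ≥ 1` and
`n ≥ 2`, the maps `φ` and `ψ` are mutually inverse linear bijections between the space of
covariant `(n+1)`-tensors over `Fin d` satisfying the K-condition of degree `n` and the space
of those satisfying the G-condition of degree `n`: they are linear, `φ` maps the K-space into
the G-space, `ψ` maps the G-space into the K-space, `ψ ∘ φ` is the identity on the former and
`φ ∘ ψ` is the identity on the latter. -/
theorem stmt7 (d n : ℕ) (hd : 1 ≤ d) (hn : 2 ≤ n) :
    -- linearity of φ and ψ:
    (∀ (a b : ℝ) (T T' : (Fin (n + 1) → Fin d) → ℝ),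
      phi (fun w => a * T w + b * T' w) = fun w => a * phi T w + b * phi T' w) ∧
    (∀ (a b : ℝ) (S S' : (Fin (n + 1) → Fin d) → ℝ),
      psi (fun w => a * S w + b * S' w) = fun w => a * psi S w + b * psi S' w) ∧
    -- φ maps the K-space into the G-space and ψ maps the G-space into the K-space:
    (∀ T : (Fin (n + 1) → Fin d) → ℝ, KCond T → GCond (phi T)) ∧
    (∀ S : (Fin (n + 1) → Fin d) → ℝ, GCond S → KCond (psi S)) ∧
    -- ψ ∘ φ is the identity on the K-space:
    (∀ T : (Fin (n + 1) → Fin d) → ℝ, KCond T → psi (phi T) = T) ∧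
    -- φ ∘ ψ is the identity on the G-space:
    (∀ S : (Fin (n + 1) → Fin d) → ℝ, GCond S → phi (psi S) = S) :=
  stmt7_general d n hn
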